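/- Let ω be a convex multifacility location function on B^n and let ω̄ : T^n → ℝ be its L-convex relaxation. For every global minimizer x* of ω̄ over T^n and every y ∈ B, the rounded point (x*)_{→y} ∈ B^n satisfies ω((x*)_{→y}) ≤ 2 · min_{x ∈ B^n} ω(x). -/

import Mathlib

open SimpleGraph

/-- A tree `T` regarded as a bipartite graph with black class `B` and white class `W`,
together with the discrete midpoint operations `bull` (`•`) and `circ` (`∘`) characterized
by: `{u • v, u ∘ v} = {a, b}` where `(a,b)` is the unique pair with
`d(u,v) = d(u,a) + d(a,b) + d(b,v)`, `d(u,a) = d(b,v)`, `d(a,b) ≤ 1`, and `u ∘ v ⪯ u • v`. -/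
structure AltTree (V : Type*) where
  T : SimpleGraph V
  tree : T.IsTree
  B : Set V
  W : Set V
  color_disjoint : Disjoint B W
  color_cover : B ∪ W = Set.univ
  adj_colors : ∀ ⦃u v : V⦄, T.Adj u v → (u ∈ B ∧ v ∈ W) ∨ (u ∈ W ∧ v ∈ B)
  bull : V → V → V
  circ : V → V → V
  mid_spec : ∀ u v : V,
      (T.dist u v = T.dist u (bull u v) + T.dist (bull u v) (circ u v) + T.dist (circ u v) v
        ∧ T.dist u (bull u v) = T.dist (circ u v) v)
    ∨ (T.dist u v = T.dist u (circ u v) + T.dist (circ u v) (bull u v) + T.dist (bull u v) v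
        ∧ T.dist u (circ u v) = T.dist (bull u v) v)
  mid_close : ∀ u v : V, T.dist (bull u v) (circ u v) ≤ 1
  circ_le_bull : ∀ u v : V, circ u v = bull u v ∨
      (T.Adj (circ u v) (bull u v) ∧ circ u v ∈ W ∧ bull u v ∈ B)

namespace AltTree

variable {V : Type*} {n : ℕ}

/-- The alternating partial order `u ⪯ v` on the vertices of `T`:
`u ⪯ v` iff `u = v` or `u` and `v` are adjacent with `u` white and `v` black. -/
def le (A : AltTree V) (u v : V) : Prop :=
  u = v ∨ (A.T.Adj u v ∧ u ∈ A.W ∧ v ∈ A.B)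

/-- The componentwise partial order on `T^n`.  `A.leP y x` means `y ∈ I(x)`,
and `A.leP x y` means `y ∈ F(x)`. -/
def leP (A : AltTree V) (x y : Fin n → V) : Prop := ∀ i, A.le (x i) (y i)

/-- The `l∞`-metric on `T^n`. -/
noncomputable def distP (A : AltTree V) (x y : Fin n → V) : ℕ :=
  Finset.univ.sup fun i => A.T.dist (x i) (y i)

/-- Componentwise `•` on `T^n`. -/
def bullP (A : AltTree V) (x y : Fin n → V) : Fin n → V := fun i => A.bull (x i) (y i)

/-- Componentwise `∘` on `T^n`. -/
def circP (A : AltTree V) (x y : Fin n → V) : Fin n → V := fun i => A.circ (x i) (y i)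

/-- Alternating L-convexity: `g(x) + g(y) ≥ g(x • y) + g(x ∘ y)` for all `x, y ∈ T^n`. -/
def IsLConvex (A : AltTree V) (g : (Fin n → V) → WithTop ℝ) : Prop :=
  ∀ x y : Fin n → V, g (A.bullP x y) + g (A.circP x y) ≤ g x + g y

end AltTree

open Classical in
/-- The even function `h̄` obtained from `h : ℤ → ℝ`:
`h̄(t) = h(t)` for even `t` and `h̄(t) = (h(t−1) + h(t+1))/2` for odd `t`. -/
noncomputable def evenize (h : ℤ → ℝ) (t : ℤ) : ℝ :=
  if Even t then h t else (h (t - 1) + h (t + 1)) / 2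

/-- A convex multifacility location function
`ω(x) = Σ_{i,j} f_{ij}(d(x_i, z_j)) + Σ_{i,j} g_{ij}(d(x_i, x_j))`. -/
noncomputable def mfl {V : Type*} {n m : ℕ} (A : AltTree V)
    (f : Fin n → Fin m → ℤ → ℝ) (g : Fin n → Fin n → ℤ → ℝ) (z : Fin m → V)
    (x : Fin n → V) : ℝ :=
  (∑ i, ∑ j, f i j (A.T.dist (x i) (z j))) + ∑ i, ∑ j, g i j (A.T.dist (x i) (x j))

/-! The rounded point `u = (x*)_{→y}` is compared with `x*` term by term: for each term
`h(d(a, b))` of `ω` one has `h(d(u_a, u_b)) ≤ 2 h̄(d(x*_a, x*_b))`.  If `d(x*_a, x*_b)` is even, the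
endpoints have the same colour, and rounding does not increase their distance (two white points
are both moved one step towards `y`, which in a tree is nonexpansive), while `h̄ = h` there.  If it
is odd, rounding increases the distance by at most one and `2 h̄(t) = h(t - 1) + h(t + 1) ≥ h(t + 1)`.
Hence `ω(u) ≤ 2 ω̄(x*) ≤ 2 ω̄(q) = 2 ω(q)` for every black `q`, as `ω̄` and `ω` agree on `B^n`. -/

namespace SimpleGraph

variable {V : Type*} {G : SimpleGraph V}

lemma Walk.dist_add_dist_le_length [DecidableEq V] {a b w : V} (p : G.Walk a b)
    (hw : w ∈ p.support) : G.dist a w + G.dist w b ≤ p.length := by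
  rw [← congrArg Walk.length (p.take_spec hw), Walk.length_append]
  exact add_le_add (dist_le _) (dist_le _)

lemma IsTree.length_eq_dist_of_isPath (hG : G.IsTree) {a b : V} {p : G.Walk a b}
    (hp : p.IsPath) : p.length = G.dist a b := by
  obtain ⟨q, hq, hql⟩ := hG.connected.exists_path_of_dist a b
  rw [(hG.existsUnique_path a b).unique hp hq, hql]

/-- If `a'` is the neighbour of `a` towards `y` but not towards `b`, then `a` lies on the
geodesic from `b` to `y`. -/
lemma IsTree.dist_eq_add_of_adj {a a' b y : V} (hG : G.IsTree) (hadj : G.Adj a a')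
    (hy : G.dist a y = G.dist a' y + 1) (hb : G.dist a' b = G.dist a b + 1) :
    G.dist b y = G.dist b a + G.dist a y := by
  classical
  obtain ⟨P, hP, hPl⟩ := hG.connected.exists_path_of_dist b a
  obtain ⟨Q, hQ, hQl⟩ := hG.connected.exists_path_of_dist a' y
  have hdisj : ∀ v ∈ P.support, v ∉ (Q.cons hadj).support.tail := by
    intro v hvP hvQ
    rw [Walk.support_cons, List.tail_cons] at hvQ
    have hsP := P.dist_add_dist_le_length hvP
    have hsQ := Q.dist_add_dist_le_length hvQ
    have := hG.connected.dist_triangle (u := a') (v := v) (w := b)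
    have := hG.connected.dist_triangle (u := a) (v := v) (w := y)
    have : G.dist b v = G.dist v b := dist_comm
    have : G.dist v a = G.dist a v := dist_comm
    have : G.dist b a = G.dist a b := dist_comm
    omega
  have hpath : (P.append (Q.cons hadj)).IsPath := by
    rw [Walk.isPath_def, Walk.support_append, List.nodup_append]
    exact ⟨hP.support_nodup, Walk.support_cons _ _ ▸ hQ.support_nodup,
      fun v hv w hw hvw => hdisj v hv (hvw ▸ hw)⟩
  have hlen := hG.length_eq_dist_of_isPath hpath
  rw [Walk.length_append, Walk.length_cons, hPl, hQl] at hlen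
  omega

end SimpleGraph

namespace AltTree

variable {V : Type*} (A : AltTree V)

lemma mem_W_iff {x : V} : x ∈ A.W ↔ x ∉ A.B := by
  refine ⟨fun hW hB => Set.disjoint_left.mp A.color_disjoint hB hW, fun hB => ?_⟩
  have hx : x ∈ A.B ∪ A.W := A.color_cover ▸ Set.mem_univ x
  exact hx.resolve_left hB

lemma mem_B_iff_of_adj {a b : V} (h : A.T.Adj a b) : a ∈ A.B ↔ b ∉ A.B := by
  have := A.mem_W_iff (x := a)
  have := A.mem_W_iff (x := b)
  rcases A.adj_colors h with hc | hc <;> tauto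

lemma even_length_iff {a b : V} (p : A.T.Walk a b) : Even p.length ↔ (a ∈ A.B ↔ b ∈ A.B) := by
  induction p with
  | nil => simp
  | cons h p ih =>
    rw [SimpleGraph.Walk.length_cons, Nat.even_add_one, ih, A.mem_B_iff_of_adj h]
    tauto

lemma even_dist_iff (a b : V) : Even (A.T.dist a b) ↔ (a ∈ A.B ↔ b ∈ A.B) := by
  obtain ⟨p, hp⟩ := A.tree.connected.exists_walk_length_eq_dist a b
  exact hp ▸ A.even_length_iff p

lemma dist_le_of_adj_toward {a b a' b' y : V} (haW : a ∈ A.W) (hbW : b ∈ A.W)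
    (ha : A.T.Adj a a') (hay : A.T.dist a y = 1 + A.T.dist a' y)
    (hb : A.T.Adj b b') (hby : A.T.dist b y = 1 + A.T.dist b' y) :
    A.T.dist a' b' ≤ A.T.dist a b := by
  have haB := (A.mem_W_iff).mp haW
  have hbB := (A.mem_W_iff).mp hbW
  have hab : Even (A.T.dist a b) := (A.even_dist_iff a b).mpr (iff_of_false haB hbB)
  have hab' : Even (A.T.dist a' b') := by
    rw [A.even_dist_iff, A.mem_B_iff_of_adj ha.symm, A.mem_B_iff_of_adj hb.symm]
    exact iff_of_true haB hbB
  rw [Nat.even_iff] at hab hab'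
  by_contra! hlt
  -- by parity `d(a', b') = d(a, b) + 2`, so `a` lies on the geodesic from `b'` to `y`
  have hconn := A.tree.connected
  have := hconn.dist_triangle (u := a') (v := a) (w := b')
  have := hconn.dist_triangle (u := a) (v := b) (w := b')
  have := hconn.dist_triangle (u := b) (v := a) (w := y)
  have : A.T.dist a' a = 1 := SimpleGraph.dist_eq_one_iff_adj.mpr ha.symm
  have : A.T.dist b b' = 1 := SimpleGraph.dist_eq_one_iff_adj.mpr hb
  have : A.T.dist b a = A.T.dist a b := SimpleGraph.dist_comm
  have hpush := A.tree.dist_eq_add_of_adj (b := b') (y := y) ha (by omega) (by omega)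
  have : A.T.dist b' a = A.T.dist a b' := SimpleGraph.dist_comm
  omega

/-- `A.RoundsToward y x u` means `u = x_{→y}`. -/
def RoundsToward (y x u : V) : Prop :=
  (x ∈ A.B → u = x) ∧ (x ∈ A.W → A.T.Adj x u ∧ A.T.dist x y = 1 + A.T.dist u y)

variable {A}

lemma roundsToward_self {y x : V} (hx : x ∈ A.B) : A.RoundsToward y x x :=
  ⟨fun _ => rfl, fun hW => absurd hx ((A.mem_W_iff).mp hW)⟩

namespace RoundsToward

variable {y x u x' u' : V}

lemma dist_le_one (hx : A.RoundsToward y x u) : A.T.dist x u ≤ 1 := by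
  by_cases hB : x ∈ A.B
  · simp [hx.1 hB]
  · exact (SimpleGraph.dist_eq_one_iff_adj.mpr ((hx.2 ((A.mem_W_iff).mpr hB)).1)).le

lemma dist_le_dist_add_one (hx : A.RoundsToward y x u) (hx' : A.RoundsToward y x' u') :
    A.T.dist u u' ≤ A.T.dist x x' + 1 := by
  have hconn := A.tree.connected
  by_cases hB : x ∈ A.B
  · rw [hx.1 hB]
    have := hconn.dist_triangle (u := x) (v := x') (w := u')
    have := hx'.dist_le_one
    omega
  by_cases hB' : x' ∈ A.B
  · rw [hx'.1 hB']
    have := hconn.dist_triangle (u := u) (v := x) (w := x')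
    have := hx.dist_le_one
    rw [dist_comm] at this
    omega
  obtain ⟨ha, hay⟩ := hx.2 ((A.mem_W_iff).mpr hB)
  obtain ⟨hb, hby⟩ := hx'.2 ((A.mem_W_iff).mpr hB')
  exact (A.dist_le_of_adj_toward ((A.mem_W_iff).mpr hB) ((A.mem_W_iff).mpr hB') ha hay hb
    hby).trans (Nat.le_succ _)

lemma dist_le_of_even (hx : A.RoundsToward y x u) (hx' : A.RoundsToward y x' u')
    (heven : Even (A.T.dist x x')) : A.T.dist u u' ≤ A.T.dist x x' := by
  rw [A.even_dist_iff] at heven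
  by_cases hB : x ∈ A.B
  · rw [hx.1 hB, hx'.1 (heven.mp hB)]
  have hB' : x' ∉ A.B := fun h => hB (heven.mpr h)
  obtain ⟨ha, hay⟩ := hx.2 ((A.mem_W_iff).mpr hB)
  obtain ⟨hb, hby⟩ := hx'.2 ((A.mem_W_iff).mpr hB')
  exact A.dist_le_of_adj_toward ((A.mem_W_iff).mpr hB) ((A.mem_W_iff).mpr hB') ha hay hb hby

end RoundsToward

end AltTree

lemma evenize_of_even {h : ℤ → ℝ} {t : ℤ} (ht : Even t) : evenize h t = h t := by
  simp [evenize, ht]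

lemma le_two_mul_evenize {h : ℤ → ℝ} (hmono : Monotone h) (hnonneg : ∀ t, 0 ≤ h t) {s t : ℤ}
    (hs : s ≤ t + 1) (hs_even : Even t → s ≤ t) : h s ≤ 2 * evenize h t := by
  by_cases ht : Even t
  · rw [evenize_of_even ht]
    linarith [hmono (hs_even ht), hnonneg t]
  · have : 2 * evenize h t = h (t - 1) + h (t + 1) := by
      simp only [evenize, if_neg ht]
      ring
    linarith [hmono hs, hnonneg (t - 1)]

section Rounding

variable {V : Type*} {A : AltTree V} {n m : ℕ} {f : Fin n → Fin m → ℤ → ℝ}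
  {g : Fin n → Fin n → ℤ → ℝ} {z : Fin m → V}

lemma AltTree.RoundsToward.apply_dist_le_two_mul_evenize {y x u x' u' : V} {h : ℤ → ℝ}
    (hmono : Monotone h) (hnonneg : ∀ t, 0 ≤ h t)
    (hx : A.RoundsToward y x u) (hx' : A.RoundsToward y x' u') :
    h (A.T.dist u u') ≤ 2 * evenize h (A.T.dist x x') :=
  le_two_mul_evenize hmono hnonneg (by exact_mod_cast hx.dist_le_dist_add_one hx')
    fun heven => by exact_mod_cast hx.dist_le_of_even hx' (by exact_mod_cast heven)

lemma mfl_le_two_mul_mfl_evenize (hf_nonneg : ∀ i j t, 0 ≤ f i j t)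
    (hg_nonneg : ∀ i j t, 0 ≤ g i j t) (hf_mono : ∀ i j, Monotone (f i j))
    (hg_mono : ∀ i j, Monotone (g i j)) (hz : ∀ j, z j ∈ A.B) {y : V} {x u : Fin n → V}
    (hround : ∀ i, A.RoundsToward y (x i) (u i)) :
    mfl A f g z u ≤ 2 * mfl A (fun i j => evenize (f i j)) (fun i j => evenize (g i j)) z x := by
  simp only [mfl, mul_add, Finset.mul_sum]
  gcongr with i _ j _ i _ j _
  · exact (hround i).apply_dist_le_two_mul_evenize (hf_mono i j) (hf_nonneg i j)
      (AltTree.roundsToward_self (hz j))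
  · exact (hround i).apply_dist_le_two_mul_evenize (hg_mono i j) (hg_nonneg i j) (hround j)

lemma mfl_evenize_of_mem_B (hz : ∀ j, z j ∈ A.B) {q : Fin n → V} (hq : ∀ i, q i ∈ A.B) :
    mfl A (fun i j => evenize (f i j)) (fun i j => evenize (g i j)) z q = mfl A f g z q := by
  have heven : ∀ a b, a ∈ A.B → b ∈ A.B → Even (A.T.dist a b : ℤ) := fun a b ha hb =>
    Int.even_coe_nat _ |>.mpr ((A.even_dist_iff a b).mpr (iff_of_true ha hb))
  simp only [mfl, evenize_of_even (heven _ _ (hq _) (hz _)),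
    evenize_of_even (heven _ _ (hq _) (hq _))]

end Rounding

theorem stmt8_general {V : Type*} (A : AltTree V) {n m : ℕ}
    (f : Fin n → Fin m → ℤ → ℝ) (g : Fin n → Fin n → ℤ → ℝ)
    (hf_nonneg : ∀ i j t, 0 ≤ f i j t) (hg_nonneg : ∀ i j t, 0 ≤ g i j t)
    (hf_mono : ∀ i j t, f i j (t - 1) ≤ f i j t)
    (hg_mono : ∀ i j t, g i j (t - 1) ≤ g i j t)
    (z : Fin m → V) (hz : ∀ j, z j ∈ A.B)
    (xstar : Fin n → V)
    (hmin : ∀ q : Fin n → V,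
      mfl A (fun i j => evenize (f i j)) (fun i j => evenize (g i j)) z xstar ≤
      mfl A (fun i j => evenize (f i j)) (fun i j => evenize (g i j)) z q)
    (y : V)
    (u : Fin n → V)
    (hround : ∀ i, (xstar i ∈ A.B → u i = xstar i) ∧
      (xstar i ∈ A.W → A.T.Adj (xstar i) (u i) ∧
        A.T.dist (xstar i) y = 1 + A.T.dist (u i) y)) :
    ∀ q : Fin n → V, (∀ i, q i ∈ A.B) → mfl A f g z u ≤ 2 * mfl A f g z q := by
  intro q hq
  calc mfl A f g z u
      ≤ 2 * mfl A (fun i j => evenize (f i j)) (fun i j => evenize (g i j)) z xstar :=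
        mfl_le_two_mul_mfl_evenize hf_nonneg hg_nonneg
          (fun i j => monotone_of_sub_one_le fun t _ => hf_mono i j t)
          (fun i j => monotone_of_sub_one_le fun t _ => hg_mono i j t) hz hround
    _ ≤ 2 * mfl A (fun i j => evenize (f i j)) (fun i j => evenize (g i j)) z q :=
        mul_le_mul_of_nonneg_left (hmin q) zero_le_two
    _ = 2 * mfl A f g z q := by rw [mfl_evenize_of_mem_B hz hq]

/-- Theorem 2.15 (2), 2-approximation by rounding.  Let `ω` be a
convex multifacility location function on `B^n` (all `f_{ij}`, `g_{ij}` nonnegative,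
nondecreasing and convex, all `z_j` black) and `ω̄` its L-convex relaxation on `T^n`
(obtained by replacing each `f_{ij}`, `g_{ij}` by its even modification).  For every
global minimizer `x*` of `ω̄` over `T^n` and every `y ∈ B`, the rounded point
`(x*)_{→y} ∈ B^n` satisfies `ω((x*)_{→y}) ≤ 2 · min_{x ∈ B^n} ω(x)`. -/
theorem stmt8 {V : Type*} (A : AltTree V) {n m : ℕ}
    (f : Fin n → Fin m → ℤ → ℝ) (g : Fin n → Fin n → ℤ → ℝ)
    (hf_nonneg : ∀ i j t, 0 ≤ f i j t) (hg_nonneg : ∀ i j t, 0 ≤ g i j t)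
    (hf_mono : ∀ i j t, f i j (t - 1) ≤ f i j t)
    (hg_mono : ∀ i j t, g i j (t - 1) ≤ g i j t)
    (hf_conv : ∀ i j t, 0 ≤ f i j (t + 1) - 2 * f i j t + f i j (t - 1))
    (hg_conv : ∀ i j t, 0 ≤ g i j (t + 1) - 2 * g i j t + g i j (t - 1))
    (z : Fin m → V) (hz : ∀ j, z j ∈ A.B)
    (xstar : Fin n → V)
    (hmin : ∀ q : Fin n → V,
      mfl A (fun i j => evenize (f i j)) (fun i j => evenize (g i j)) z xstar ≤
      mfl A (fun i j => evenize (f i j)) (fun i j => evenize (g i j)) z q)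
    (y : V) (hy : y ∈ A.B)
    (u : Fin n → V)
    (hround : ∀ i, (xstar i ∈ A.B → u i = xstar i) ∧
      (xstar i ∈ A.W → A.T.Adj (xstar i) (u i) ∧
        A.T.dist (xstar i) y = 1 + A.T.dist (u i) y)) :
    ∀ q : Fin n → V, (∀ i, q i ∈ A.B) → mfl A f g z u ≤ 2 * mfl A f g z q :=
  stmt8_general A f g hf_nonneg hg_nonneg hf_mono hg_mono z hz xstar hmin y u hround
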